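/- arXiv:1004.5230 — 3 statements merged into one kernel-verified Lean document; each statement's English description precedes it below -/
import Mathlib

section
/- Let G be a twin-free graph, v ∈ V(G), and suppose x, y are twins in G−v. If G−x (or G−y) has a pair of twins, then v is one of the vertices of that twin pair. -/
open SimpleGraph

/-- The closed ball of radius 1 (closed neighborhood) of `x`. -/
def ball {V : Type*} (G : SimpleGraph V) (x : V) : Set V := {y | y = x ∨ G.Adj x y}

/-- `C` separates every pair of distinct vertices. -/
def IsSeparating {V : Type*} (G : SimpleGraph V) (C : Set V) : Prop :=
  ∀ x y : V, x ≠ y → _root_.ball G x ∩ C ≠ _root_.ball G y ∩ C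

/-- `C` is an identifying code of `G`. -/
def IsIdCode {V : Type*} (G : SimpleGraph V) (C : Set V) : Prop :=
  (∀ x : V, (_root_.ball G x ∩ C).Nonempty) ∧ IsSeparating G C

/-- A graph is twin-free if distinct vertices have distinct closed neighborhoods. -/
def TwinFree {V : Type*} (G : SimpleGraph V) : Prop :=
  ∀ x y : V, _root_.ball G x = _root_.ball G y → x = y

/-- The minimum size of an identifying code. -/
noncomputable def gammaID {V : Type*} (G : SimpleGraph V) : ℕ :=
  sInf {n | ∃ C : Set V, IsIdCode G C ∧ C.ncard = n}

/-- The minimum size of a separating set. -/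
noncomputable def gammaS {V : Type*} (G : SimpleGraph V) : ℕ :=
  sInf {n | ∃ C : Set V, IsSeparating G C ∧ C.ncard = n}


/-!
If `z, t` are twins of `G - x` other than `v`, they can only be told apart in `G` by `x`.
But `x` and `y` have the same neighbours outside `v`, so `x` is adjacent to `z` (resp. `t`)
exactly when `y` is, and `y`, being a vertex of `G - x`, does not tell `z` and `t` apart.
Hence `z, t` would be twins in `G`.
-/

lemma mem_ball_comm {V : Type*} (G : SimpleGraph V) {u w : V} :
    w ∈ _root_.ball G u ↔ u ∈ _root_.ball G w := by
  simp only [_root_.ball, Set.mem_ofPred_eq, eq_comm, G.adj_comm]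

lemma mem_ball_induce {V : Type*} (G : SimpleGraph V) (s : Set V) (u w : s) :
    w ∈ _root_.ball (G.induce s) u ↔ (w : V) ∈ _root_.ball G u := by
  simp [_root_.ball, Subtype.ext_iff]

lemma ball_induce_eq_iff {V : Type*} (G : SimpleGraph V) (s : Set V) (u w : s) :
    _root_.ball (G.induce s) u = _root_.ball (G.induce s) w ↔
      ∀ a ∈ s, a ∈ _root_.ball G u ↔ a ∈ _root_.ball G w := by
  simp only [Set.ext_iff, Subtype.forall, mem_ball_induce]

lemma ball_eq_of_twins_off {V : Type*} (G : SimpleGraph V) {v x y z t : V}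
    (hyx : y ≠ x) (hzv : z ≠ v) (htv : t ≠ v)
    (hxy : ∀ a ≠ v, a ∈ _root_.ball G x ↔ a ∈ _root_.ball G y)
    (hzt : ∀ a ≠ x, a ∈ _root_.ball G z ↔ a ∈ _root_.ball G t) :
    _root_.ball G z = _root_.ball G t := by
  ext a
  rcases eq_or_ne a x with rfl | hax
  · calc a ∈ _root_.ball G z ↔ z ∈ _root_.ball G a := mem_ball_comm G
      _ ↔ z ∈ _root_.ball G y := hxy z hzv
      _ ↔ y ∈ _root_.ball G z := mem_ball_comm G
      _ ↔ y ∈ _root_.ball G t := hzt y hyx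
      _ ↔ t ∈ _root_.ball G y := mem_ball_comm G
      _ ↔ t ∈ _root_.ball G a := (hxy t htv).symm
      _ ↔ a ∈ _root_.ball G t := mem_ball_comm G
  · exact hzt a hax

lemma eq_or_eq_of_twins_induce_compl {V : Type*} {G : SimpleGraph V} (hTF : TwinFree G)
    {v x y : V} (hyx : y ≠ x) (hxv : x ≠ v) (hyv : y ≠ v)
    (htwins : _root_.ball (G.induce ({v}ᶜ : Set V)) ⟨x, hxv⟩ =
      _root_.ball (G.induce ({v}ᶜ : Set V)) ⟨y, hyv⟩)
    (z t : ({x}ᶜ : Set V)) (hzt : z ≠ t)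
    (hb : _root_.ball (G.induce ({x}ᶜ : Set V)) z = _root_.ball (G.induce ({x}ᶜ : Set V)) t) :
    v = (z : V) ∨ v = (t : V) := by
  by_contra! hv
  rw [ball_induce_eq_iff] at htwins hb
  exact hzt <| Subtype.ext <| hTF _ _ <| ball_eq_of_twins_off G hyx (Ne.symm hv.1) (Ne.symm hv.2)
    htwins hb

theorem stmt3 {V : Type*} (G : SimpleGraph V) (hTF : TwinFree G) (v x y : V)
    (hxy : x ≠ y) (hxv : x ≠ v) (hyv : y ≠ v)
    (htwins : _root_.ball (G.induce ({v}ᶜ : Set V)) ⟨x, hxv⟩ = _root_.ball (G.induce ({v}ᶜ : Set V)) ⟨y, hyv⟩) :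
    (∀ z t : ({x}ᶜ : Set V), z ≠ t →
      _root_.ball (G.induce ({x}ᶜ : Set V)) z = _root_.ball (G.induce ({x}ᶜ : Set V)) t →
      v = (z : V) ∨ v = (t : V)) ∧
    (∀ z t : ({y}ᶜ : Set V), z ≠ t →
      _root_.ball (G.induce ({y}ᶜ : Set V)) z = _root_.ball (G.induce ({y}ᶜ : Set V)) t →
      v = (z : V) ∨ v = (t : V)) :=
  ⟨eq_or_eq_of_twins_induce_compl hTF hxy.symm hxv hyv htwins,
   eq_or_eq_of_twins_induce_compl hTF hxy hyv hxv htwins.symm⟩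
end

section
/- For every k ≥ 1, every minimum separating set S of A_k contains an S-universal vertex, i.e., a vertex whose closed neighborhood contains S. -/
open SimpleGraph

/-- The graph `A_k` on vertices `x_1,…,x_{2k}` (indexed `0,…,2k-1`):
`x_i` adjacent to `x_j` iff `i ≠ j` and `|i - j| ≤ k - 1`. -/
def Agraph (k : ℕ) : SimpleGraph (Fin (2 * k)) where
  Adj i j := i ≠ j ∧ ((i : ℤ) - (j : ℤ)).natAbs ≤ k - 1
  symm := by
    constructor
    intro i j h
    refine ⟨h.1.symm, ?_⟩
    have : ((j : ℤ) - (i : ℤ)).natAbs = ((i : ℤ) - (j : ℤ)).natAbs := by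
      rw [← Int.natAbs_neg]; ring_nf
    omega
  loopless := by constructor; intro i h; exact h.1 rfl

/-- The join of two graphs. -/
def joinG {α β : Type*} (G₁ : SimpleGraph α) (G₂ : SimpleGraph β) : SimpleGraph (α ⊕ β) where
  Adj x y := match x, y with
    | Sum.inl a, Sum.inl b => G₁.Adj a b
    | Sum.inr a, Sum.inr b => G₂.Adj a b
    | _, _ => True
  symm := by constructor; rintro (a | a) (b | b) h <;> first | exact h.symm | trivial
  loopless := by
    constructor
    rintro (a | a) h
    · exact G₁.loopless.irrefl _ h
    · exact G₂.loopless.irrefl _ h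

/-- The star `K_{1,t}`: vertex `0` is the center, adjacent to all other vertices. -/
def starGraph (t : ℕ) : SimpleGraph (Fin (t + 1)) where
  Adj i j := i ≠ j ∧ (i = 0 ∨ j = 0)
  symm := by constructor; rintro i j ⟨h1, h2⟩; exact ⟨h1.symm, h2.symm⟩
  loopless := by constructor; rintro i ⟨h1, _⟩; exact h1 rfl

/-!
In `A_k` the ball of `x_i` is the interval `[i - (k-1), i + (k-1)]`. For every inner vertex
`x_m` there are two consecutive vertices whose balls differ only at `x_m` (their other
difference falls outside `[0, 2k-1]`), so a separating set contains every inner vertex.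
Dropping the last vertex leaves a separating set, so a minimum one misses some vertex, which
must be an endpoint; and the complement of an endpoint is the ball of `x_{k-1}` or of `x_k`.
-/

section Separating

variable {V : Type*} {G : SimpleGraph V} {S : Set V}

theorem isSeparating_iff_exists_mem_not_iff : IsSeparating G S ↔
    ∀ x y, x ≠ y → ∃ z ∈ S, ¬(z ∈ _root_.ball G x ↔ z ∈ _root_.ball G y) := by
  simp only [IsSeparating, Ne, Set.ext_iff, not_forall, Set.mem_inter_iff]
  refine forall₂_congr fun x y => imp_congr_right fun _ => exists_congr fun z => ?_
  tauto

theorem IsSeparating.mem_of_forall_ne (hS : IsSeparating G S) {x y m : V} (hxy : x ≠ y)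
    (h : ∀ z, z ≠ m → (z ∈ _root_.ball G x ↔ z ∈ _root_.ball G y)) : m ∈ S := by
  obtain ⟨z, hzS, hz⟩ := isSeparating_iff_exists_mem_not_iff.mp hS x y hxy
  by_cases hzm : z = m
  · exact hzm ▸ hzS
  · exact absurd (h z hzm) hz

end Separating

namespace Agraph

variable {k : ℕ}

theorem mem_ball_iff {x y : Fin (2 * k)} :
    y ∈ _root_.ball (Agraph k) x ↔ (x : ℕ) ≤ y + (k - 1) ∧ (y : ℕ) ≤ x + (k - 1) := by
  simp only [_root_.ball, Agraph, Set.mem_ofPred_eq, ← Fin.val_inj, ne_eq]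
  omega

theorem isSeparating_compl_last (hk : 1 ≤ k) :
    IsSeparating (Agraph k) {⟨2 * k - 1, by omega⟩}ᶜ := by
  have separate (x y : Fin (2 * k)) (hxy : (x : ℕ) < y) :
      ∃ z ∈ ({⟨2 * k - 1, by omega⟩}ᶜ : Set (Fin (2 * k))),
        ¬(z ∈ _root_.ball (Agraph k) x ↔ z ∈ _root_.ball (Agraph k) y) := by
    have := y.isLt
    simp only [Set.mem_compl_singleton_iff, Ne, Fin.ext_iff, mem_ball_iff]
    by_cases hy : k ≤ y
    · exact ⟨⟨x - (k - 1), by omega⟩, by simp only; omega⟩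
    · exact ⟨⟨y + (k - 1), by omega⟩, by simp only; omega⟩
  refine isSeparating_iff_exists_mem_not_iff.mpr fun x y hxy => ?_
  rcases Fin.lt_or_lt_of_ne hxy with h | h
  · exact separate x y h
  · simpa only [Iff.comm] using separate y x h

theorem mem_of_isSeparating {S : Set (Fin (2 * k))} (hS : IsSeparating (Agraph k) S)
    {m : Fin (2 * k)} (h₀ : 0 < (m : ℕ)) (h₁ : (m : ℕ) < 2 * k - 1) : m ∈ S := by
  by_cases hm : (m : ℕ) < k
  · refine hS.mem_of_forall_ne (x := ⟨m + k - 1, by omega⟩) (y := ⟨m + k, by omega⟩)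
      (by simp only [ne_eq, Fin.mk.injEq]; omega) fun z hz => ?_
    simp only [mem_ball_iff, Ne, ← Fin.val_inj] at hz ⊢
    omega
  · refine hS.mem_of_forall_ne (x := ⟨m - k, by omega⟩) (y := ⟨m - k + 1, by omega⟩)
      (by simp only [ne_eq, Fin.mk.injEq]; omega) fun z hz => ?_
    simp only [mem_ball_iff, Ne, ← Fin.val_inj] at hz ⊢
    omega

theorem exists_compl_singleton_subset_ball (hk : 1 ≤ k) {v : Fin (2 * k)}
    (hv : (v : ℕ) = 0 ∨ (v : ℕ) = 2 * k - 1) :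
    ∃ x : Fin (2 * k), {v}ᶜ ⊆ _root_.ball (Agraph k) x := by
  simp only [Set.subset_def, Set.mem_compl_singleton_iff, Ne, Fin.ext_iff, mem_ball_iff]
  rcases hv with hv | hv
  · exact ⟨⟨k, by omega⟩, fun z hz => by have := z.isLt; simp only; omega⟩
  · exact ⟨⟨k - 1, by omega⟩, fun z hz => by have := z.isLt; simp only; omega⟩

end Agraph

theorem stmt8 (k : ℕ) (hk : 1 ≤ k) (S : Set (Fin (2 * k)))
    (hS : IsSeparating (Agraph k) S)
    (hmin : ∀ S' : Set (Fin (2 * k)), IsSeparating (Agraph k) S' → S.ncard ≤ S'.ncard) :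
    ∃ x : Fin (2 * k), S ⊆ ball (Agraph k) x := by
  obtain ⟨v, hv⟩ : Sᶜ.Nonempty := by
    rw [← Set.ssubset_univ_iff_nonempty_compl, Set.ssubset_univ_iff]
    rintro rfl
    exact (hmin _ (Agraph.isSeparating_compl_last hk)).not_gt
      (Set.ncard_lt_ncard (Set.compl_ssubset_univ.mpr (Set.singleton_nonempty _)))
  have hv_end : (v : ℕ) = 0 ∨ (v : ℕ) = 2 * k - 1 := by
    by_contra! h
    exact hv (Agraph.mem_of_isSeparating hS (by omega) (by omega))
  obtain ⟨x, hx⟩ := Agraph.exists_compl_singleton_subset_ball hk hv_end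
  exact ⟨x, fun z hz => hx fun hzv => hv (hzv ▸ hz)⟩
end

section
/- If G is a Δ-regular twin-free graph with Δ ≥ 1, then for every vertex x of G, the set V(G)∖{x} is an identifying code of G. -/
open SimpleGraph

/-!
Removing one vertex `x` from the code can only merge two closed neighbourhoods that differ in `x`
alone. In a `Δ`-regular graph all closed neighbourhoods have exactly `Δ + 1` elements, so two of
them that agree off `x` are equal, and twin-freeness separates their centres. Domination of `x`
itself needs one neighbour, i.e. `Δ ≥ 1`.
-/

namespace Set

variable {α : Type*} {s t : Set α} {a : α}

theorem ncard_eq_add_one_of_sdiff_singleton_eq (hs : s.Finite) (has : a ∈ s) (hat : a ∉ t)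
    (h : s \ {a} = t \ {a}) : s.ncard = t.ncard + 1 := by
  rw [← ncard_sdiff_singleton_add_one has hs, h, sdiff_singleton_eq_self hat]

theorem eq_of_sdiff_singleton_eq_of_ncard_eq (hs : s.Finite) (ht : t.Finite)
    (h : s \ {a} = t \ {a}) (hcard : s.ncard = t.ncard) : s = t := by
  have hmem : a ∈ s ↔ a ∈ t := by
    constructor
    · intro has
      by_contra hat
      have := ncard_eq_add_one_of_sdiff_singleton_eq hs has hat h
      omega
    · intro hat
      by_contra has
      have := ncard_eq_add_one_of_sdiff_singleton_eq ht hat has h.symm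
      omega
  ext y
  by_cases hy : y = a
  · exact hy ▸ hmem
  · simpa [hy] using congrArg (y ∈ ·) h

end Set

theorem ball_eq_insert_neighborSet {V : Type*} (G : SimpleGraph V) (x : V) :
    _root_.ball G x = insert x (G.neighborSet x) := rfl

theorem finite_ball {V : Type*} (G : SimpleGraph V) [G.LocallyFinite] (x : V) :
    (_root_.ball G x).Finite :=
  (G.neighborSet x).toFinite.insert x

theorem ncard_ball {V : Type*} (G : SimpleGraph V) [G.LocallyFinite] {d : ℕ}
    (hreg : G.IsRegularOfDegree d) (x : V) : (_root_.ball G x).ncard = d + 1 := by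
  rw [ball_eq_insert_neighborSet, Set.ncard_insert_of_notMem (G.notMem_neighborSet_self (a := x)),
    Set.ncard_eq_toFinset_card', Set.toFinset_card, card_neighborSet_eq_degree, hreg.degree_eq]

theorem ball_inter_compl_singleton_nonempty {V : Type*} (G : SimpleGraph V) [G.LocallyFinite]
    {d : ℕ} (hd : 1 ≤ d) (hreg : G.IsRegularOfDegree d) (x v : V) :
    (_root_.ball G v ∩ {x}ᶜ).Nonempty := by
  by_cases hv : v = x
  · obtain ⟨w, hw⟩ := (G.degree_pos_iff_exists_adj v).mp (hreg.degree_eq v ▸ hd)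
    exact ⟨w, Or.inr hw, hv ▸ hw.ne.symm⟩
  · exact ⟨v, Or.inl rfl, hv⟩

theorem isSeparating_compl_singleton {V : Type*} (G : SimpleGraph V) [G.LocallyFinite]
    (hTF : TwinFree G) {d : ℕ} (hreg : G.IsRegularOfDegree d) (x : V) :
    IsSeparating G {x}ᶜ := by
  intro u v huv h
  refine huv (hTF u v (Set.eq_of_sdiff_singleton_eq_of_ncard_eq ?_ ?_ h ?_))
  · exact finite_ball G u
  · exact finite_ball G v
  · rw [ncard_ball G hreg, ncard_ball G hreg]

theorem stmt19 {V : Type*} [Fintype V] (G : SimpleGraph V) [DecidableRel G.Adj]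
    (hTF : TwinFree G) (Δ : ℕ) (hΔ : 1 ≤ Δ) (hreg : G.IsRegularOfDegree Δ) :
    ∀ x : V, IsIdCode G ({x}ᶜ : Set V) := fun x =>
  ⟨ball_inter_compl_singleton_nonempty G hΔ hreg x, isSeparating_compl_singleton G hTF hreg x⟩
end
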